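/- Let X be a continuous lattice with Scott topology and r(v) = ⋁ v↓. Then r ∘ Φ(r) = r ∘ μ_X as maps Φ²(X) → X, i.e., for every open filter α on Φ(X), ⋁ (Φ(r)(α))↓ = ⋁ (μ_X(α))↓. -/

import Mathlib

open Set TopologicalSpace

variable {X Y : Type*}

/-- An open filter on a topological space: a lattice-theoretic filter of the
frame of open sets (so it contains `univ` and satisfies
`A ∩ B ∈ v ↔ A ∈ v ∧ B ∈ v` for open `A`, `B`). -/
def IsOpenFilter [TopologicalSpace X] (v : Set (Set X)) : Prop :=
  (∀ A ∈ v, IsOpen A) ∧ Set.univ ∈ v ∧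
    ∀ A B : Set X, IsOpen A → IsOpen B → (A ∩ B ∈ v ↔ A ∈ v ∧ B ∈ v)

/-- `Φ(X)`: the set of open filters of `X`, ordered by inclusion. -/
abbrev OF (X : Type*) [TopologicalSpace X] := {v : Set (Set X) // IsOpenFilter v}

/-- The basic open sets `φ(A) = {v ∈ Φ(X) | A ∈ v}` of the filter space. -/
def phi [TopologicalSpace X] (A : Set X) : Set (OF X) := {v : OF X | A ∈ v.1}

/-- The topology on `Φ(X)` generated by the sets `φ(A)`, `A` open. -/
instance OF.topologicalSpace (X : Type*) [TopologicalSpace X] : TopologicalSpace (OF X) :=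
  generateFrom {S | ∃ A : Set X, IsOpen A ∧ S = phi A}

/-- An ideal of a poset: a nonempty directed lower set. -/
def IsIdeal [Preorder X] (I : Set X) : Prop :=
  I.Nonempty ∧ DirectedOn (· ≤ ·) I ∧ IsLowerSet I

/-- The way-below relation on a complete lattice:
`x ≪ y` iff every ideal whose sup dominates `y` contains `x`. -/
def wayBelow [CompleteLattice X] (x y : X) : Prop :=
  ∀ I : Set X, IsIdeal I → y ≤ sSup I → x ∈ I

/-- A continuous lattice: every element is the sup of the elements way below it. -/
def IsContinuousLattice (X : Type*) [CompleteLattice X] : Prop :=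
  ∀ x : X, x = sSup {y | wayBelow y x}

/-- The Scott topology on a complete lattice: open sets are the upper sets
inaccessible by sups of ideals. -/
instance scottTop (X : Type*) [CompleteLattice X] : TopologicalSpace X where
  IsOpen U := IsUpperSet U ∧ ∀ I : Set X, IsIdeal I → sSup I ∈ U → (I ∩ U).Nonempty
  isOpen_univ := ⟨isUpperSet_univ, fun I hI _ => hI.1.imp fun _ ha => ⟨ha, trivial⟩⟩
  isOpen_inter U V hU hV := ⟨hU.1.inter hV.1, fun I hI hs => by
    obtain ⟨a, haI, haU⟩ := hU.2 I hI hs.1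
    obtain ⟨b, hbI, hbV⟩ := hV.2 I hI hs.2
    obtain ⟨c, hcI, hac, hbc⟩ := hI.2.1 a haI b hbI
    exact ⟨c, hcI, hU.1 hac haU, hV.1 hbc hbV⟩⟩
  isOpen_sUnion S hS := ⟨isUpperSet_sUnion fun s hs => (hS s hs).1, fun I hI hm => by
    obtain ⟨U, hU, hsU⟩ := hm
    obtain ⟨a, haI, haU⟩ := (hS U hU).2 I hI hsU
    exact ⟨a, haI, U, hU, haU⟩⟩

/-- `v↓ = ⋃_{A ∈ v} A↓` where `A↓ = {y | A ⊆ ↑y}`. -/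
def downOf [CompleteLattice X] (v : Set (Set X)) : Set X :=
  {y | ∃ A ∈ v, A ⊆ Set.Ici y}

/-! In a continuous lattice `y ≤ s` as soon as every `z ≪ y` satisfies `z ≤ s`, so it suffices to
move each such `z`, for `y` in one of the two `↓`-sets, into the other one, as the witness
`↟z = {x | z ≪ x} ⊆ ↑z`. This set is Scott open, and interpolation gives the key fact:
`z ≪ r(v)` forces `↟z ∈ v`. Hence `r⁻¹(↑y) ⊆ φ(↟z)`, which moves `z` from left to right.
Conversely `φ(A) ⊆ r⁻¹(↟z)` for `A ⊆ ↑y`, and `r⁻¹(↟z)` is open because `r` is continuous,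
which moves `z` back. -/

section WayBelow

variable [CompleteLattice X]

abbrev wayAbove (z : X) : Set X := {x | wayBelow z x}

lemma wayBelow_bot (y : X) : wayBelow ⊥ y := fun _ hI _ => by
  obtain ⟨a, ha⟩ := hI.1
  exact hI.2.2 bot_le ha

lemma wayBelow.mono_right {z y w : X} (hzy : wayBelow z y) (hyw : y ≤ w) : wayBelow z w :=
  fun I hI hw => hzy I hI (hyw.trans hw)

lemma wayBelow.mono_left {z y w : X} (hzy : z ≤ y) (hyw : wayBelow y w) : wayBelow z w :=
  fun I hI hw => hI.2.2 hzy (hyw I hI hw)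

lemma wayBelow.le {z y : X} (hzy : wayBelow z y) : z ≤ y :=
  hzy (Iic y) ⟨⟨y, le_rfl⟩, fun _ ha _ hb => ⟨y, le_rfl, ha, hb⟩, fun _ _ hba ha => hba.trans ha⟩
    (le_sSup le_rfl)

lemma wayBelow.sup {a b y : X} (ha : wayBelow a y) (hb : wayBelow b y) : wayBelow (a ⊔ b) y :=
  fun I hI hy => by
    obtain ⟨c, hc, hac, hbc⟩ := hI.2.1 a (ha I hI hy) b (hb I hI hy)
    exact hI.2.2 (sup_le hac hbc) hc

lemma isIdeal_wayBelow (x : X) : IsIdeal {z | wayBelow z x} :=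
  ⟨⟨⊥, wayBelow_bot x⟩, fun a ha b hb => ⟨a ⊔ b, ha.sup hb, le_sup_left, le_sup_right⟩,
    fun _ _ hba ha => wayBelow.mono_left hba ha⟩

lemma le_of_forall_wayBelow_le (h : IsContinuousLattice X) {y s : X}
    (hs : ∀ z, wayBelow z y → z ≤ s) : y ≤ s := by
  rw [h y]
  exact sSup_le hs

lemma exists_wayBelow_and_wayBelow (h : IsContinuousLattice X) {z y : X} (hzy : wayBelow z y) :
    ∃ w, wayBelow z w ∧ wayBelow w y := by
  set I : Set X := {u | ∃ w, wayBelow u w ∧ wayBelow w y}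
  have hI : IsIdeal I := by
    refine ⟨⟨⊥, ⊥, wayBelow_bot _, wayBelow_bot _⟩, ?_, ?_⟩
    · rintro a ⟨wa, hawa, hway⟩ b ⟨wb, hbwb, hwby⟩
      exact ⟨a ⊔ b, ⟨wa ⊔ wb, (hawa.mono_right le_sup_left).sup (hbwb.mono_right le_sup_right),
        hway.sup hwby⟩, le_sup_left, le_sup_right⟩
    · rintro a b hba ⟨w, haw, hwy⟩
      exact ⟨w, wayBelow.mono_left hba haw, hwy⟩
  -- `y = ⋁_{w ≪ y} ⋁_{u ≪ w} u`, and every such `u` lies in `I`.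
  have hyI : y ≤ sSup I := le_of_forall_wayBelow_le h fun w hwy =>
    le_of_forall_wayBelow_le h fun u huw => le_sSup ⟨w, huw, hwy⟩
  exact hzy I hI hyI

lemma isOpen_wayAbove (h : IsContinuousLattice X) (z : X) : IsOpen (wayAbove z) := by
  refine ⟨fun _ _ hab ha => wayBelow.mono_right ha hab, fun I hI hs => ?_⟩
  obtain ⟨w, hzw, hwI⟩ := exists_wayBelow_and_wayBelow h hs
  exact ⟨w, hwI I hI le_rfl, hzw⟩

lemma exists_wayBelow_mem_of_isOpen (h : IsContinuousLattice X) {U : Set X} (hU : IsOpen U)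
    {x : X} (hx : x ∈ U) : ∃ w ∈ U, wayBelow w x := by
  obtain ⟨w, hwx, hwU⟩ := hU.2 _ (isIdeal_wayBelow x) (by rwa [← h x])
  exact ⟨w, hwU, hwx⟩

end WayBelow

section OpenFilter

variable [TopologicalSpace X]

lemma OF.mem_of_subset (v : OF X) {A B : Set X} (hB : IsOpen B) (hA : A ∈ v.1) (hAB : A ⊆ B) :
    B ∈ v.1 :=
  ((v.2.2.2 A B (v.2.1 A hA) hB).1 (by rwa [inter_eq_self_of_subset_left hAB])).2

lemma isOpen_phi {A : Set X} (hA : IsOpen A) : IsOpen (phi A) :=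
  isOpen_generateFrom_of_mem ⟨A, hA, rfl⟩

end OpenFilter

section StructureMap

variable [CompleteLattice X]

/-- The map `r(v) = ⋁ v↓`. -/
def OF.supDown (v : OF X) : X := sSup (downOf v.1)

lemma OF.le_supDown {v : OF X} {A : Set X} {y : X} (hA : A ∈ v.1) (hAy : A ⊆ Ici y) :
    y ≤ v.supDown :=
  le_sSup ⟨A, hA, hAy⟩

lemma isIdeal_downOf (v : OF X) : IsIdeal (downOf v.1) := by
  obtain ⟨hopen, huniv, hinter⟩ := v.2
  refine ⟨⟨⊥, univ, huniv, fun _ _ => bot_le⟩, ?_, ?_⟩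
  · rintro a ⟨A, hA, hAa⟩ b ⟨B, hB, hBb⟩
    exact ⟨a ⊔ b, ⟨A ∩ B, (hinter A B (hopen A hA) (hopen B hB)).2 ⟨hA, hB⟩,
      fun x hx => sup_le (hAa hx.1) (hBb hx.2)⟩, le_sup_left, le_sup_right⟩
  · rintro a b hba ⟨A, hA, hAa⟩
    exact ⟨A, hA, fun x hx => hba.trans (hAa hx)⟩

lemma OF.wayAbove_mem_of_wayBelow_supDown (h : IsContinuousLattice X) {v : OF X} {z : X}
    (hz : wayBelow z v.supDown) : wayAbove z ∈ v.1 := by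
  obtain ⟨w, hzw, hwv⟩ := exists_wayBelow_and_wayBelow h hz
  obtain ⟨B, hBv, hBw⟩ := hwv _ (isIdeal_downOf v) le_rfl
  exact v.mem_of_subset (isOpen_wayAbove h z) hBv fun x hx => hzw.mono_right (hBw hx)

lemma OF.continuous_supDown (h : IsContinuousLattice X) : Continuous (OF.supDown (X := X)) := by
  refine continuous_def.2 fun U hU => ?_
  have hpre : OF.supDown ⁻¹' U = ⋃ w ∈ U, phi (wayAbove w) := by
    ext v
    simp only [mem_preimage, mem_iUnion, exists_prop]
    constructor
    · intro hv
      obtain ⟨w, hwU, hwv⟩ := exists_wayBelow_mem_of_isOpen h hU hv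
      exact ⟨w, hwU, wayAbove_mem_of_wayBelow_supDown h hwv⟩
    · rintro ⟨w, hwU, hwv⟩
      exact hU.1 (OF.le_supDown hwv fun _ hx => wayBelow.le hx) hwU
  rw [hpre]
  exact isOpen_biUnion fun w _ => isOpen_phi (isOpen_wayAbove h w)

lemma sSup_downOf_le_sSup_downOf (h : IsContinuousLattice X) {S T : Set (Set X)}
    (hST : ∀ y ∈ downOf S, ∀ z, wayBelow z y → wayAbove z ∈ T) :
    sSup (downOf S) ≤ sSup (downOf T) :=
  sSup_le fun y hy => le_of_forall_wayBelow_le h fun z hzy =>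
    le_sSup ⟨wayAbove z, hST y hy z hzy, fun _ hx => wayBelow.le hx⟩

end StructureMap

/-- for a continuous lattice with `r(v) = ⋁ v↓`, the algebra law
`r ∘ Φ(r) = r ∘ μ_X` holds: for every open filter `α` on `Φ(X)`,
`⋁ (Φ(r)(α))↓ = ⋁ (μ_X(α))↓`. -/
theorem r_mapOF_eq_r_muOF [CompleteLattice X] (h : IsContinuousLattice X)
    (α : OF (OF X)) :
    sSup (downOf {A : Set X | IsOpen A ∧
        (fun v : OF X => sSup (downOf v.1)) ⁻¹' A ∈ α.1}) =
      sSup (downOf {A : Set X | IsOpen A ∧ phi A ∈ α.1}) := by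
  apply le_antisymm
  · refine sSup_downOf_le_sSup_downOf h fun y ⟨A, ⟨_, hrA⟩, hAy⟩ z hzy =>
      ⟨isOpen_wayAbove h z, α.mem_of_subset (isOpen_phi (isOpen_wayAbove h z)) hrA ?_⟩
    exact fun v hv => OF.wayAbove_mem_of_wayBelow_supDown h (hzy.mono_right (hAy hv))
  · refine sSup_downOf_le_sSup_downOf h fun y ⟨A, ⟨_, hφA⟩, hAy⟩ z hzy =>
      ⟨isOpen_wayAbove h z, α.mem_of_subset ?_ hφA ?_⟩
    · exact (isOpen_wayAbove h z).preimage (OF.continuous_supDown h)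
    · exact fun v hv => hzy.mono_right (OF.le_supDown hv hAy)
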